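/- arXiv:1809.01792 — 3 statements merged into one kernel-verified Lean document; each statement's English description precedes it below -/
import Mathlib

section
/- Suppose the null p-values are superuniform, p_j is independent of the remaining coordinates p_{-j} for each j ∈ H0, and the filter F is simple. Then the Focused BH procedure at level q controls the generalized false discovery rate: FDR_F = E[FDP(U*)] ≤ q. -/
open MeasureTheory Finset

/-- Total prioritization weight of a prioritization vector. -/
noncomputable def normU {m : ℕ} (U : Fin m → ℝ) : ℝ := ∑ j, U j

/-- Threshold rejection set `R(t,p) = {j : p_j ≤ t}`. -/
noncomputable def Rset {m : ℕ} (t : ℝ) (p : Fin m → ℝ) : Finset (Fin m) :=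
  Finset.univ.filter (fun j => p j ≤ t)

/-- Focused BH FDP estimate `m·t / ‖F(R(t,p),p)‖` (with `x/0 = 0`). -/
noncomputable def FDPhat {m : ℕ} (F : Finset (Fin m) → (Fin m → ℝ) → (Fin m → ℝ))
    (p : Fin m → ℝ) (t : ℝ) : ℝ :=
  (m : ℝ) * t / normU (F (Rset t p) p)

/-- The Focused BH threshold: the largest `t ∈ {0, p_1, ..., p_m}` with `FDPhat(t) ≤ q`. -/
noncomputable def tstar {m : ℕ} (F : Finset (Fin m) → (Fin m → ℝ) → (Fin m → ℝ))
    (q : ℝ) (p : Fin m → ℝ) : ℝ :=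
  sSup {t : ℝ | (t = 0 ∨ ∃ j, t = p j) ∧ FDPhat F p t ≤ q}

/-- Generalized FDP of a prioritization vector (with `0/0 = 0`). -/
noncomputable def genFDP {m : ℕ} (H0 : Finset (Fin m)) (U : Fin m → ℝ) : ℝ :=
  (∑ j ∈ H0, U j) / (∑ j, U j)

/-- A filter outputs prioritization scores in `[0,1]`, vanishing outside the rejection set. -/
def IsFilter {m : ℕ} (F : Finset (Fin m) → (Fin m → ℝ) → (Fin m → ℝ)) : Prop :=
  ∀ (R : Finset (Fin m)) (x : Fin m → ℝ) (j : Fin m),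
    (j ∉ R → F R x j = 0) ∧ F R x j ∈ Set.Icc (0 : ℝ) 1

/-- Null p-values are superuniform. -/
def Superuniform {Ω : Type*} [MeasurableSpace Ω] (μ : Measure Ω) {m : ℕ}
    (p : Ω → Fin m → ℝ) (H0 : Finset (Fin m)) : Prop :=
  ∀ j ∈ H0, ∀ t ∈ Set.Icc (0 : ℝ) 1, μ {ω | p ω j ≤ t} ≤ ENNReal.ofReal t

/-- A filter is simple: if `p1, p2` differ only in coordinate `j` and `j` can receive a
positive prioritization score under both, then the total weight `‖F(R,·)‖` agrees on `p1, p2`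
for every rejection set containing `j`. -/
def SimpleFilter {m : ℕ} (F : Finset (Fin m) → (Fin m → ℝ) → (Fin m → ℝ)) : Prop :=
  ∀ (j : Fin m) (p1 p2 : Fin m → ℝ), (∀ i, i ≠ j → p1 i = p2 i) →
    (∃ R10 : Finset (Fin m), 0 < F R10 p1 j) →
    (∃ R20 : Finset (Fin m), 0 < F R20 p2 j) →
    ∀ R : Finset (Fin m), j ∈ R → normU (F R p1) = normU (F R p2)

section FBHAux

variable {m : ℕ} {F : Finset (Fin m) → (Fin m → ℝ) → (Fin m → ℝ)} {q : ℝ}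

lemma mem_Rset {t : ℝ} {p : Fin m → ℝ} {i : Fin m} : i ∈ Rset t p ↔ p i ≤ t := by
  simp [Rset]

lemma normU_nonneg (hF : IsFilter F) (R : Finset (Fin m)) (x : Fin m → ℝ) :
    0 ≤ normU (F R x) :=
  Finset.sum_nonneg fun i _ => (hF R x i).2.1

lemma le_normU (hF : IsFilter F) (R : Finset (Fin m)) (x : Fin m → ℝ) (j : Fin m) :
    F R x j ≤ normU (F R x) :=
  Finset.single_le_sum (fun i _ => (hF R x i).2.1) (mem_univ j)

lemma FDPhat_zero (F : Finset (Fin m) → (Fin m → ℝ) → (Fin m → ℝ)) (p : Fin m → ℝ) :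
    FDPhat F p 0 = 0 := by
  simp [FDPhat]

lemma tstarSet_finite (F : Finset (Fin m) → (Fin m → ℝ) → (Fin m → ℝ)) (q : ℝ)
    (p : Fin m → ℝ) :
    {t : ℝ | (t = 0 ∨ ∃ j, t = p j) ∧ FDPhat F p t ≤ q}.Finite := by
  refine Set.Finite.subset ((Set.finite_range p).insert 0) ?_
  rintro t ⟨h1 | ⟨i, rfl⟩, -⟩
  · exact Set.mem_insert_iff.2 (Or.inl h1)
  · exact Set.mem_insert_of_mem _ ⟨i, rfl⟩

lemma zero_mem_tstarSet (hq : 0 ≤ q) (F : Finset (Fin m) → (Fin m → ℝ) → (Fin m → ℝ))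
    (p : Fin m → ℝ) :
    (0:ℝ) ∈ {t : ℝ | (t = 0 ∨ ∃ j, t = p j) ∧ FDPhat F p t ≤ q} :=
  ⟨Or.inl rfl, by rw [FDPhat_zero]; exact hq⟩

lemma tstar_mem (hq : 0 ≤ q) (p : Fin m → ℝ) :
    tstar F q p ∈ {t : ℝ | (t = 0 ∨ ∃ j, t = p j) ∧ FDPhat F p t ≤ q} :=
  Set.Nonempty.csSup_mem ⟨0, zero_mem_tstarSet hq F p⟩ (tstarSet_finite F q p)

lemma le_tstar (hq : 0 ≤ q) (p : Fin m → ℝ) {t : ℝ}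
    (h1 : t = 0 ∨ ∃ j, t = p j) (h2 : FDPhat F p t ≤ q) : t ≤ tstar F q p :=
  le_csSup (tstarSet_finite F q p).bddAbove ⟨h1, h2⟩

lemma pj_le_tstar (hF : IsFilter F) {p : Fin m → ℝ} {j : Fin m}
    (h : 0 < F (Rset (tstar F q p) p) p j) : p j ≤ tstar F q p := by
  by_contra hcon
  have hnot : j ∉ Rset (tstar F q p) p := fun hmem => hcon (mem_Rset.1 hmem)
  exact h.ne' ((hF _ p j).1 hnot)

/-- Asymmetric key lemma: if `p1, p2` differ only at `j`, `j` gets a positive score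
under both at the respective `t*`, and `t*(p2) ≤ t*(p1)`, then the rejection sets agree. -/
lemma rset_tstar_eq (hF : IsFilter F) (hsimple : SimpleFilter F) (hq : 0 ≤ q)
    {j : Fin m} {p1 p2 : Fin m → ℝ} (hdiff : ∀ i, i ≠ j → p1 i = p2 i)
    (h1 : 0 < F (Rset (tstar F q p1) p1) p1 j)
    (h2 : 0 < F (Rset (tstar F q p2) p2) p2 j)
    (hle : tstar F q p2 ≤ tstar F q p1) :
    Rset (tstar F q p1) p1 = Rset (tstar F q p2) p2 := by
  set t1 := tstar F q p1 with ht1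
  set t2 := tstar F q p2 with ht2
  have hj1 : p1 j ≤ t1 := pj_le_tstar hF h1
  have hj2 : p2 j ≤ t2 := pj_le_tstar hF h2
  have hnorm : ∀ R, j ∈ R → normU (F R p1) = normU (F R p2) :=
    hsimple j p1 p2 hdiff ⟨_, h1⟩ ⟨_, h2⟩
  have hN1 : 0 < normU (F (Rset t1 p1) p1) := lt_of_lt_of_le h1 (le_normU hF _ _ j)
  have hfdp1 : FDPhat F p1 t1 ≤ q := (tstar_mem hq p1).2
  have step1 : ∀ i, p2 i ≤ t1 → p2 i ≤ t2 := by
    by_contra hcon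
    push_neg at hcon
    obtain ⟨i0, hi0, hgt⟩ := hcon
    set s : Finset (Fin m) := univ.filter (fun i => p2 i ≤ t1) with hs
    have hi0s : i0 ∈ s := by simp [hs, hi0]
    have hsne : s.Nonempty := ⟨i0, hi0s⟩
    set c := s.sup' hsne (fun i => p2 i) with hc
    have hcmem : ∃ i, c = p2 i := by
      obtain ⟨i, -, hi⟩ := Finset.exists_mem_eq_sup' hsne (fun i => p2 i)
      exact ⟨i, hi⟩
    have hct1 : c ≤ t1 := Finset.sup'_le _ _ fun i hi => by
      simpa [hs] using hi
    have hi0c : p2 i0 ≤ c := Finset.le_sup' (fun i => p2 i) hi0s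
    have hRc : Rset c p2 = Rset t1 p1 := by
      ext i
      simp only [mem_Rset]
      constructor
      · intro h
        rcases eq_or_ne i j with rfl | hij
        · exact hj1
        · rw [hdiff i hij]; exact h.trans hct1
      · intro h
        rcases eq_or_ne i j with rfl | hij
        · exact le_trans hj2 (le_trans (le_of_lt hgt) hi0c)
        · exact Finset.le_sup' (fun i => p2 i) (by
            simp only [hs, Finset.mem_filter, Finset.mem_univ, true_and]
            rw [← hdiff i hij]; exact h)
    have hjR : j ∈ Rset t1 p1 := mem_Rset.2 hj1
    have hfdpc : FDPhat F p2 c ≤ q := by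
      have hnn : normU (F (Rset c p2) p2) = normU (F (Rset t1 p1) p1) := by
        rw [hRc]; exact (hnorm _ hjR).symm
      rw [FDPhat, hnn]
      rw [FDPhat] at hfdp1
      refine le_trans ?_ hfdp1
      have hmc : (m:ℝ) * c ≤ (m:ℝ) * t1 :=
        mul_le_mul_of_nonneg_left hct1 (Nat.cast_nonneg m)
      exact div_le_div_of_nonneg_right hmc hN1.le
    have : c ≤ t2 := le_tstar hq p2 (Or.inr hcmem) hfdpc
    exact absurd (lt_of_lt_of_le hgt hi0c) (not_lt.2 this)
  ext i
  simp only [mem_Rset]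
  constructor
  · intro h
    rcases eq_or_ne i j with rfl | hij
    · exact hj2
    · exact step1 i (by rw [← hdiff i hij]; exact h)
  · intro h
    rcases eq_or_ne i j with rfl | hij
    · exact hj1
    · rw [hdiff i hij]; exact h.trans hle


/-- If `p1, p2` differ only at `j` and `j` receives a positive prioritization score under
both (at the respective `t*`), then the total weights `‖U*‖` coincide. -/
lemma normU_tstar_eq (hF : IsFilter F) (hsimple : SimpleFilter F) (hq : 0 ≤ q)
    {j : Fin m} {p1 p2 : Fin m → ℝ} (hdiff : ∀ i, i ≠ j → p1 i = p2 i)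
    (h1 : 0 < F (Rset (tstar F q p1) p1) p1 j)
    (h2 : 0 < F (Rset (tstar F q p2) p2) p2 j) :
    normU (F (Rset (tstar F q p1) p1) p1) = normU (F (Rset (tstar F q p2) p2) p2) := by
  have hnorm : ∀ R, j ∈ R → normU (F R p1) = normU (F R p2) :=
    hsimple j p1 p2 hdiff ⟨_, h1⟩ ⟨_, h2⟩
  have hj1 : j ∈ Rset (tstar F q p1) p1 := mem_Rset.2 (pj_le_tstar hF h1)
  have hR : Rset (tstar F q p1) p1 = Rset (tstar F q p2) p2 := by
    rcases le_total (tstar F q p2) (tstar F q p1) with hle | hle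
    · exact rset_tstar_eq hF hsimple hq hdiff h1 h2 hle
    · exact (rset_tstar_eq hF hsimple hq (fun i hi => (hdiff i hi).symm) h2 h1 hle).symm
  calc normU (F (Rset (tstar F q p1) p1) p1)
      = normU (F (Rset (tstar F q p1) p1) p2) := hnorm _ hj1
    _ = _ := by rw [hR]

lemma tstar_le_of_pos (hF : IsFilter F) (hq0 : 0 ≤ q) (hm : 0 < m)
    {p : Fin m → ℝ} {j : Fin m} (h : 0 < F (Rset (tstar F q p) p) p j) :
    tstar F q p ≤ q * normU (F (Rset (tstar F q p) p) p) / m := by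
  have hN : 0 < normU (F (Rset (tstar F q p) p) p) :=
    lt_of_lt_of_le h (le_normU hF _ _ j)
  have hfdp := (tstar_mem (F := F) hq0 p).2
  rw [FDPhat, div_le_iff₀ hN] at hfdp
  rw [le_div_iff₀ (show (0:ℝ) < m by exact_mod_cast hm)]
  linarith

section Measurability

lemma measurable_F_Rset (hFmeas : ∀ (R : Finset (Fin m)) (j : Fin m),
      Measurable (fun x : Fin m → ℝ => F R x j))
    {u : (Fin m → ℝ) → ℝ} (hu : Measurable u) (j : Fin m) :
    Measurable fun x => F (Rset (u x) x) x j := by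
  classical
  have hset : ∀ R : Finset (Fin m), MeasurableSet {x : Fin m → ℝ | Rset (u x) x = R} := by
    intro R
    have hEq : {x : Fin m → ℝ | Rset (u x) x = R} = ⋂ i, {x | x i ≤ u x ↔ i ∈ R} := by
      ext x
      simp only [Set.mem_setOf_eq, Set.mem_iInter, Finset.ext_iff, mem_Rset]
    rw [hEq]
    refine MeasurableSet.iInter fun i => ?_
    by_cases hi : i ∈ R
    · simp only [hi, iff_true]
      exact measurableSet_le (measurable_pi_apply i) hu
    · simp only [hi, iff_false]
      exact (measurableSet_le (measurable_pi_apply i) hu).compl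
  have heq : (fun x => F (Rset (u x) x) x j)
      = fun x => ∑ R : Finset (Fin m), if Rset (u x) x = R then F R x j else 0 := by
    funext x
    symm
    rw [Finset.sum_ite_eq]
    simp
  rw [heq]
  exact Finset.measurable_sum _ fun R _ =>
    Measurable.ite (hset R) (hFmeas R j) measurable_const

lemma measurable_normU_Rset (hFmeas : ∀ (R : Finset (Fin m)) (j : Fin m),
      Measurable (fun x : Fin m → ℝ => F R x j))
    {u : (Fin m → ℝ) → ℝ} (hu : Measurable u) :
    Measurable fun x => normU (F (Rset (u x) x) x) := by
  simp only [normU]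
  exact Finset.measurable_sum _ fun j _ => measurable_F_Rset hFmeas hu j

lemma measurable_sup'_fun {ι : Type*} {α : Type*} [MeasurableSpace α]
    (s : Finset ι) (hs : s.Nonempty) (f : ι → α → ℝ) (hf : ∀ i, Measurable (f i)) :
    Measurable fun x => s.sup' hs fun i => f i x := by
  induction hs using Finset.Nonempty.cons_induction with
  | singleton i => simpa using hf i
  | cons i s hi hs ih =>
      have : (fun x => (Finset.cons i s hi).sup' (Finset.cons_nonempty hi) fun i => f i x)
          = fun x => max (f i x) (s.sup' hs fun i => f i x) := by
        funext x
        rw [Finset.sup'_cons hs]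
      rw [this]
      exact (hf i).max ih

lemma measurable_tstar (hFmeas : ∀ (R : Finset (Fin m)) (j : Fin m),
      Measurable (fun x : Fin m → ℝ => F R x j))
    (hm : 0 < m) (hq : 0 ≤ q) :
    Measurable (tstar F q) := by
  have hne : (univ : Finset (Fin m)).Nonempty := ⟨⟨0, hm⟩, mem_univ _⟩
  have heq : tstar F q = fun x =>
      max 0 (univ.sup' hne fun i => if FDPhat F x (x i) ≤ q then x i else 0) := by
    funext x
    have hbdd := (tstarSet_finite F q x).bddAbove
    apply le_antisymm
    · apply csSup_le ⟨0, zero_mem_tstarSet hq F x⟩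
      rintro t ⟨rfl | ⟨i, rfl⟩, h2⟩
      · exact le_max_left _ _
      · refine le_trans ?_ (le_max_right _ _)
        have : x i = if FDPhat F x (x i) ≤ q then x i else 0 := (if_pos h2).symm
        rw [this]
        exact Finset.le_sup' (fun i => if FDPhat F x (x i) ≤ q then x i else 0) (mem_univ i)
    · apply max_le
      · exact le_csSup hbdd (zero_mem_tstarSet hq F x)
      · refine Finset.sup'_le _ _ fun i _ => ?_
        by_cases h : FDPhat F x (x i) ≤ q
        · rw [if_pos h]
          exact le_csSup hbdd ⟨Or.inr ⟨i, rfl⟩, h⟩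
        · rw [if_neg h]
          exact le_csSup hbdd (zero_mem_tstarSet hq F x)
  rw [heq]
  refine measurable_const.max ?_
  refine measurable_sup'_fun _ hne _ fun i => ?_
  refine Measurable.ite ?_ (measurable_pi_apply i) measurable_const
  refine measurableSet_le ?_ measurable_const
  simp only [FDPhat]
  exact (measurable_const.mul (measurable_pi_apply i)).div
    (measurable_normU_Rset hFmeas (measurable_pi_apply i))

end Measurability

end FBHAux

/-- **Focused BH under independence (Theorem 1(ii), Focused BH part).**
If the null p-values are superuniform, each null `p_j` is independent of the remaining
coordinates, and the filter is simple, then Focused BH at level `q` controls the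
generalized FDR: `E[FDP(U*)] ≤ q` where `U* = F(R(t*,p), p)`. -/
theorem focusedBH_FDR_control_of_indep_of_simple
    {Ω : Type*} [MeasurableSpace Ω] (μ : Measure Ω) [IsProbabilityMeasure μ]
    {m : ℕ} (H0 : Finset (Fin m)) (p : Ω → Fin m → ℝ)
    (hpmeas : Measurable p)
    (hp01 : ∀ ω i, p ω i ∈ Set.Icc (0 : ℝ) 1)
    (hsuper : Superuniform μ p H0)
    (hindep : ∀ j ∈ H0, ProbabilityTheory.IndepFun
      (fun ω => p ω j) (fun ω => (fun i : {i : Fin m // i ≠ j} => p ω i)) μ)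
    (F : Finset (Fin m) → (Fin m → ℝ) → (Fin m → ℝ))
    (hF : IsFilter F)
    (hFmeas : ∀ (R : Finset (Fin m)) (j : Fin m), Measurable (fun x : Fin m → ℝ => F R x j))
    (hsimple : SimpleFilter F)
    (q : ℝ) (hq : q ∈ Set.Ioo (0 : ℝ) 1) :
    ∫ ω, genFDP H0 (F (Rset (tstar F q (p ω)) (p ω)) (p ω)) ∂μ ≤ q := by
  obtain ⟨hq0, hq1⟩ := hq
  classical
  rcases Nat.eq_zero_or_pos m with hm | hm
  · have hH0 : H0 = ∅ := Finset.eq_empty_of_forall_notMem fun x _ => absurd x.2 (by omega)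
    simp only [hH0, genFDP, Finset.sum_empty, zero_div]
    rw [integral_zero]
    exact hq0.le
  have hmR : (0:ℝ) < m := by exact_mod_cast hm
  have htstar_meas : Measurable (tstar F q) := measurable_tstar hFmeas hm hq0.le
  have hΦn : ∀ j : Fin m, Measurable fun x => F (Rset (tstar F q x) x) x j :=
    fun j => measurable_F_Rset hFmeas htstar_meas j
  have hΦd : Measurable fun x => normU (F (Rset (tstar F q x) x) x) :=
    measurable_normU_Rset hFmeas htstar_meas
  have hfj_nonneg : ∀ (x : Fin m → ℝ) (j : Fin m),
      0 ≤ F (Rset (tstar F q x) x) x j / normU (F (Rset (tstar F q x) x) x) :=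
    fun x j => div_nonneg (hF _ _ j).2.1 (normU_nonneg hF _ _)
  have hfj_le_one : ∀ (x : Fin m → ℝ) (j : Fin m),
      F (Rset (tstar F q x) x) x j / normU (F (Rset (tstar F q x) x) x) ≤ 1 :=
    fun x j => div_le_one_of_le₀ (le_normU hF _ _ j) (normU_nonneg hF _ _)
  have hint : ∀ j : Fin m, Integrable (fun ω =>
      F (Rset (tstar F q (p ω)) (p ω)) (p ω) j
        / normU (F (Rset (tstar F q (p ω)) (p ω)) (p ω))) μ := by
    intro j
    refine Integrable.mono' (integrable_const (1:ℝ)) ?_ ?_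
    · exact (((hΦn j).comp hpmeas).div (hΦd.comp hpmeas)).aestronglyMeasurable
    · refine Filter.Eventually.of_forall fun ω => ?_
      rw [Real.norm_eq_abs, abs_of_nonneg (hfj_nonneg _ j)]
      exact hfj_le_one _ j
  have key : ∀ j ∈ H0, (∫ ω, F (Rset (tstar F q (p ω)) (p ω)) (p ω) j
      / normU (F (Rset (tstar F q (p ω)) (p ω)) (p ω)) ∂μ) ≤ q / m := by
    intro j hj
    have hind := (hindep j hj).symm
    set pj : Ω → ℝ := fun ω => p ω j with hpj
    set prest : Ω → ({i : Fin m // i ≠ j} → ℝ) := fun ω => fun i => p ω i with hprest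
    have hpjmeas : Measurable pj := (measurable_pi_apply j).comp hpmeas
    have hprestmeas : Measurable prest :=
      measurable_pi_lambda _ fun i => (measurable_pi_apply (i : Fin m)).comp hpmeas
    set glue : ({i : Fin m // i ≠ j} → ℝ) × ℝ → (Fin m → ℝ) :=
      fun z i => if h : i = j then z.2 else z.1 ⟨i, h⟩ with hglue
    have hgluemeas : Measurable glue := by
      refine measurable_pi_lambda _ fun i => ?_
      by_cases h : i = j
      · subst h
        simp only [hglue, dif_pos]
        exact measurable_snd
      · simp only [hglue, dif_neg h]
        exact (measurable_pi_apply _).comp measurable_fst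
    have hglueT : ∀ ω, glue (prest ω, pj ω) = p ω := by
      intro ω; funext i
      by_cases h : i = j
      · subst h; simp [hglue, hpj]
      · simp [hglue, h, hprest]
    set H : ({i : Fin m // i ≠ j} → ℝ) × ℝ → ℝ := fun z =>
      F (Rset (tstar F q (glue z)) (glue z)) (glue z) j
        / normU (F (Rset (tstar F q (glue z)) (glue z)) (glue z)) with hHdef
    have hHmeas : Measurable H := ((hΦn j).comp hgluemeas).div (hΦd.comp hgluemeas)
    have hH_nonneg : ∀ z, 0 ≤ H z := fun z => hfj_nonneg _ j
    have hH_le_one : ∀ z, H z ≤ 1 := fun z => hfj_le_one _ j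
    set ν1 : Measure ({i : Fin m // i ≠ j} → ℝ) := μ.map prest with hν1
    set ν2 : Measure ℝ := μ.map pj with hν2
    haveI : IsProbabilityMeasure ν1 := Measure.isProbabilityMeasure_map hprestmeas.aemeasurable
    haveI : IsProbabilityMeasure ν2 := Measure.isProbabilityMeasure_map hpjmeas.aemeasurable
    have hmap : μ.map (fun ω => (prest ω, pj ω)) = ν1.prod ν2 := by
      rw [ProbabilityTheory.indepFun_iff_map_prod_eq_prod_map_map hprestmeas.aemeasurable
        hpjmeas.aemeasurable] at hind
      exact hind
    have hHint : Integrable H (ν1.prod ν2) := by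
      refine Integrable.mono' (integrable_const (1:ℝ)) hHmeas.aestronglyMeasurable ?_
      refine Filter.Eventually.of_forall fun z => ?_
      rw [Real.norm_eq_abs, abs_of_nonneg (hH_nonneg z)]
      exact hH_le_one z
    have inner : ∀ y, ∫ x, H (y, x) ∂ν2 ≤ q / m := by
      intro y
      by_cases hE : ∃ x : ℝ,
          0 < F (Rset (tstar F q (glue (y, x))) (glue (y, x))) (glue (y, x)) j
      case neg =>
        push_neg at hE
        have hzero : ∀ x : ℝ, H (y, x) = 0 := by
          intro x
          have h0 : F (Rset (tstar F q (glue (y, x))) (glue (y, x))) (glue (y, x)) j = 0 :=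
            le_antisymm (hE x) (hF _ _ j).2.1
          simp only [hHdef, h0, zero_div]
        calc ∫ x, H (y, x) ∂ν2 = ∫ _x, (0:ℝ) ∂ν2 :=
              integral_congr_ae (Filter.Eventually.of_forall hzero)
          _ = 0 := integral_zero _ _
          _ ≤ q / m := div_nonneg hq0.le hmR.le
      case pos =>
        obtain ⟨x0, hx0⟩ := hE
        have hNpos : 0 < normU (F (Rset (tstar F q (glue (y, x0))) (glue (y, x0))) (glue (y, x0))) :=
          lt_of_lt_of_le hx0 (le_normU hF _ _ j)
        set N := normU (F (Rset (tstar F q (glue (y, x0))) (glue (y, x0))) (glue (y, x0))) with hNdef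
        set u := min 1 (q * N / m) with hu
        have hu0 : 0 < u := lt_min one_pos (by positivity)
        have hu1 : u ≤ 1 := min_le_left _ _
        have hae01 : ∀ᵐ x ∂ν2, x ∈ Set.Icc (0:ℝ) 1 := by
          rw [hν2]
          exact (ae_map_iff hpjmeas.aemeasurable measurableSet_Icc).mpr
            (Filter.Eventually.of_forall fun ω => hp01 ω j)
        have hbound : ∀ᵐ x ∂ν2, H (y, x) ≤ Set.indicator (Set.Iic u) (fun _ => (q/m)/u) x := by
          filter_upwards [hae01] with x hx
          by_cases hpos : 0 < F (Rset (tstar F q (glue (y, x))) (glue (y, x))) (glue (y, x)) j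
          · have hdiffc : ∀ i, i ≠ j → glue (y, x) i = glue (y, x0) i := by
              intro i hi; simp only [hglue, dif_neg hi]
            have hnormeq : normU (F (Rset (tstar F q (glue (y, x))) (glue (y, x))) (glue (y, x))) = N :=
              normU_tstar_eq hF hsimple hq0.le hdiffc hpos hx0
            have hxj : glue (y, x) j = x := by simp [hglue]
            have hxle : x ≤ tstar F q (glue (y, x)) := by
              have h := pj_le_tstar hF hpos
              rwa [hxj] at h
            have htle : tstar F q (glue (y, x)) ≤ q * N / m := by
              have h := tstar_le_of_pos hF hq0.le hm hpos
              rwa [hnormeq] at h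
            have hxu : x ≤ u := le_min hx.2 (hxle.trans htle)
            rw [Set.indicator_of_mem (Set.mem_Iic.2 hxu)]
            have hHle : H (y, x) ≤ 1 / N := by
              simp only [hHdef]
              rw [hnormeq]
              exact div_le_div_of_nonneg_right (hF _ _ j).2.2 hNpos.le
            refine hHle.trans ?_
            rw [div_le_div_iff₀ hNpos hu0]
            calc 1 * u = u := one_mul u
              _ ≤ q * N / m := min_le_right _ _
              _ = q / m * N := by ring
          · have h0 : F (Rset (tstar F q (glue (y, x))) (glue (y, x))) (glue (y, x)) j = 0 :=
              le_antisymm (not_lt.1 hpos) (hF _ _ j).2.1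
            have hz : H (y, x) = 0 := by simp only [hHdef, h0, zero_div]
            rw [hz]
            exact Set.indicator_nonneg
              (fun _ _ => div_nonneg (div_nonneg hq0.le hmR.le) hu0.le) x
        have hgint : Integrable (Set.indicator (Set.Iic u) fun _ => (q/m)/u) ν2 :=
          (integrable_const _).indicator measurableSet_Iic
        have hmeasle : (ν2 (Set.Iic u)).toReal ≤ u := by
          have h1 : ν2 (Set.Iic u) ≤ ENNReal.ofReal u := by
            rw [hν2, Measure.map_apply hpjmeas measurableSet_Iic]
            exact hsuper j hj u ⟨hu0.le, hu1⟩
          exact le_trans (ENNReal.toReal_mono ENNReal.ofReal_ne_top h1)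
            (ENNReal.toReal_ofReal hu0.le).le
        calc ∫ x, H (y, x) ∂ν2
            ≤ ∫ x, Set.indicator (Set.Iic u) (fun _ => (q/m)/u) x ∂ν2 :=
              integral_mono_of_nonneg (Filter.Eventually.of_forall fun x => hH_nonneg _)
                hgint hbound
          _ = (ν2 (Set.Iic u)).toReal • ((q/m)/u) := integral_indicator_const _ measurableSet_Iic
          _ = ((q/m)/u) * (ν2 (Set.Iic u)).toReal := by rw [smul_eq_mul, mul_comm]
          _ ≤ ((q/m)/u) * u :=
              mul_le_mul_of_nonneg_left hmeasle (div_nonneg (div_nonneg hq0.le hmR.le) hu0.le)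
          _ = q/m := div_mul_cancel₀ _ (ne_of_gt hu0)
    calc (∫ ω, F (Rset (tstar F q (p ω)) (p ω)) (p ω) j
        / normU (F (Rset (tstar F q (p ω)) (p ω)) (p ω)) ∂μ)
        = ∫ ω, H (prest ω, pj ω) ∂μ := by
          refine integral_congr_ae (Filter.Eventually.of_forall fun ω => ?_)
          simp only [hHdef, hglueT ω]
      _ = ∫ z, H z ∂(ν1.prod ν2) := by
          rw [← hmap]
          exact (integral_map (hprestmeas.prodMk hpjmeas).aemeasurable
            hHmeas.aestronglyMeasurable).symm
      _ = ∫ y, ∫ x, H (y, x) ∂ν2 ∂ν1 := integral_prod H hHint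
      _ ≤ ∫ _y, q / m ∂ν1 :=
          integral_mono_of_nonneg
            (Filter.Eventually.of_forall fun y => integral_nonneg fun x => hH_nonneg _)
            (integrable_const _) (Filter.Eventually.of_forall inner)
      _ = q / m := by simp
  calc ∫ ω, genFDP H0 (F (Rset (tstar F q (p ω)) (p ω)) (p ω)) ∂μ
      = ∫ ω, ∑ j ∈ H0, F (Rset (tstar F q (p ω)) (p ω)) (p ω) j
          / normU (F (Rset (tstar F q (p ω)) (p ω)) (p ω)) ∂μ := by
        refine integral_congr_ae (Filter.Eventually.of_forall fun ω => ?_)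
        simp only [genFDP, normU, Finset.sum_div]
    _ = ∑ j ∈ H0, ∫ ω, F (Rset (tstar F q (p ω)) (p ω)) (p ω) j
          / normU (F (Rset (tstar F q (p ω)) (p ω)) (p ω)) ∂μ :=
        integral_finset_sum H0 fun j _ => hint j
    _ ≤ ∑ _j ∈ H0, q / m := Finset.sum_le_sum key
    _ ≤ q := by
        rw [Finset.sum_const, nsmul_eq_mul]
        have hcard : (H0.card : ℝ) ≤ m := by
          exact_mod_cast (Finset.card_le_univ H0).trans_eq (by simp)
        calc (H0.card : ℝ) * (q / m) ≤ m * (q / m) :=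
              mul_le_mul_of_nonneg_right hcard (div_nonneg hq0.le hmR.le)
          _ = q := by field_simp
end

section
/- Suppose the null p-values are superuniform, the p-values are block independent with respect to a collection of sets I = (I_j)_{j∈[m]} with j ∈ I_j (i.e., for each j, p_j is independent of the coordinates p_{−I_j} outside I_j), and the filter F is block simple with respect to the same collection I. Then the Focused BH procedure at level q controls the generalized false discovery rate: FDR_F = E[FDP(U*)] ≤ q. -/
open MeasureTheory Finset

/-- A filter is block simple with respect to a collection `I` of blocks `I j ∋ j`: if `p1, p2`
agree outside `I j` and `j` can receive a positive prioritization score under both, then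
`‖F(R1,p1)‖ = ‖F(R2,p2)‖` whenever `j ∈ R1 ∩ R2` and `R1 \ I j = R2 \ I j`. -/
def BlockSimpleFilter {m : ℕ} (F : Finset (Fin m) → (Fin m → ℝ) → (Fin m → ℝ))
    (I : Fin m → Finset (Fin m)) : Prop :=
  ∀ (j : Fin m) (p1 p2 : Fin m → ℝ), (∀ i, i ∉ I j → p1 i = p2 i) →
    (∃ R10 : Finset (Fin m), 0 < F R10 p1 j) →
    (∃ R20 : Finset (Fin m), 0 < F R20 p2 j) →
    ∀ R1 R2 : Finset (Fin m), j ∈ R1 → j ∈ R2 → R1 \ I j = R2 \ I j →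
      normU (F R1 p1) = normU (F R2 p2)


/-!
The FDR is `∑_{j ∈ H₀} E[U*_j / ‖U*‖]`, so it suffices to bound each null term by `q / m`.
Fix a null `j` and let `z = p_{-I_j}`. When `j` can receive a positive score, block simplicity
makes `g(s) = ‖F(R(s,p) ∪ {j}, p)‖` depend on `p` only through `z`; averaging it over the
conditional law of `p` given `z` turns it into a measurable function of `z`. As `g` only jumps
at the coordinates of `z`, the supremum of `{t ≤ 1 | m t ≤ q g(t)}` is a threshold `T(z)` with
`t* ≤ T(z)` and `m T(z) ≤ q ‖U*‖` whenever `U*_j > 0`. Hence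
`U*_j / ‖U*‖ ≤ (q / m) 1{p_j ≤ T(z)} / T(z)`, and since `p_j` is superuniform and independent
of `z`, the right side has expectation at most `q / m`.
-/

namespace FocusedBH

open ProbabilityTheory
open scoped ENNReal

section Threshold

variable {m : ℕ} {F : Finset (Fin m) → (Fin m → ℝ) → (Fin m → ℝ)} {q : ℝ} {p : Fin m → ℝ}

lemma finite_tstar_candidates :
    {t : ℝ | (t = 0 ∨ ∃ j, t = p j) ∧ FDPhat F p t ≤ q}.Finite :=
  ((Set.finite_singleton 0).union (Set.finite_range p)).subset
    fun _ ht => ht.1.imp id fun ⟨j, hj⟩ => ⟨j, hj.symm⟩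

lemma tstar_mem (hq : 0 ≤ q) :
    (tstar F q p = 0 ∨ ∃ j, tstar F q p = p j) ∧ FDPhat F p (tstar F q p) ≤ q :=
  Set.Nonempty.csSup_mem (s := {t : ℝ | (t = 0 ∨ ∃ j, t = p j) ∧ FDPhat F p t ≤ q})
    ⟨0, Or.inl rfl, by simpa [FDPhat] using hq⟩ finite_tstar_candidates

lemma tstar_le_one (hq : 0 ≤ q) (hp : ∀ i, p i ≤ 1) : tstar F q p ≤ 1 := by
  obtain ⟨h | ⟨i, h⟩, -⟩ := tstar_mem (F := F) (p := p) hq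
  · exact h ▸ zero_le_one
  · exact h ▸ hp i

lemma le_tstar (i : Fin m) (hi : FDPhat F p (p i) ≤ q) : p i ≤ tstar F q p :=
  le_csSup finite_tstar_candidates.bddAbove ⟨Or.inr ⟨i, rfl⟩, hi⟩

end Threshold

lemma measurable_gridPt {ι : Type*} (o : Option ι) : Measurable fun z : ι → ℝ => o.elim 0 z := by
  cases o with
  | none => exact measurable_const
  | some i => exact measurable_pi_apply i

noncomputable section Grid

variable {ι : Type*} [Fintype ι] (z : ι → ℝ)

def nextGridPt (s : ℝ) : ℝ :=
  univ.inf' univ_nonempty fun o : Option ι => o.elim 1 fun i => if s < z i then z i else 1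

-- If `g` is constant on each interval `[s, nextGridPt z s)` cut out by the grid points `0, z i`,
-- then `gridThreshold z a g = sup {t ≤ 1 | t ≤ a * g t}`, `gridCandidate` being the sup over one
-- interval.
def gridCandidate (a : ℝ) (g : ℝ → ℝ) (s : ℝ) : ℝ :=
  if s ≤ a * g s then min (a * g s) (nextGridPt z s) else 0

def gridThreshold (a : ℝ) (g : ℝ → ℝ) : ℝ :=
  univ.sup' univ_nonempty fun o : Option ι => gridCandidate z a g (o.elim 0 z)

variable {z}

lemma le_nextGridPt_iff {s t : ℝ} :
    t ≤ nextGridPt z s ↔ t ≤ 1 ∧ ∀ i, s < z i → t ≤ z i := by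
  simp only [nextGridPt, le_inf'_iff, mem_univ, true_imp_iff, Option.forall, Option.elim]
  refine and_congr_right fun h1 => forall_congr' fun i => ?_
  split_ifs with h <;> simp [h, h1]

lemma nextGridPt_le_one (s : ℝ) : nextGridPt z s ≤ 1 :=
  (le_nextGridPt_iff.mp le_rfl).1

lemma nextGridPt_le {s : ℝ} {i : ι} (h : s < z i) : nextGridPt z s ≤ z i :=
  (le_nextGridPt_iff.mp le_rfl).2 i h

lemma gridThreshold_nonneg (a : ℝ) (g : ℝ → ℝ) : 0 ≤ gridThreshold z a g := by
  refine le_trans ?_ (le_sup' _ (mem_univ (none : Option ι)))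
  show 0 ≤ gridCandidate z a g 0
  unfold gridCandidate
  split_ifs with h
  · exact le_min h (le_nextGridPt_iff.mpr ⟨zero_le_one, fun i hi => hi.le⟩)
  · exact le_rfl

lemma gridThreshold_le_one (a : ℝ) (g : ℝ → ℝ) : gridThreshold z a g ≤ 1 := by
  refine sup'_le _ _ fun o _ => ?_
  unfold gridCandidate
  split_ifs
  · exact (min_le_right _ _).trans (nextGridPt_le_one _)
  · exact zero_le_one

variable {a N t : ℝ} {g : ℝ → ℝ}

lemma le_gridThreshold (ht0 : 0 ≤ t) (ht1 : t ≤ 1) (htN : t ≤ a * N)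
    (hconst : ∀ s ≤ t, (∀ i, z i ≤ t → z i ≤ s) → g s = N) :
    t ≤ gridThreshold z a g := by
  obtain ⟨o, ho, hmax⟩ := exists_max_image (univ.filter fun o : Option ι => o.elim 0 z ≤ t)
    (fun o => o.elim 0 z) ⟨none, by simpa using ht0⟩
  set s := o.elim 0 z
  have hst : s ≤ t := (mem_filter.mp ho).2
  have hgs : g s = N := hconst s hst fun i hi => hmax (some i) (by simpa using hi)
  have hnext : t ≤ nextGridPt z s := le_nextGridPt_iff.mpr ⟨ht1, fun i hi =>
    le_of_not_gt fun hit => hi.not_ge (hmax (some i) (by simpa using hit.le))⟩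
  refine le_trans ?_ (le_sup' _ (mem_univ o))
  show t ≤ gridCandidate z a g s
  rw [gridCandidate, hgs, if_pos (hst.trans htN)]
  exact le_min htN hnext

lemma gridThreshold_le (ht0 : 0 ≤ t) (htN : t ≤ a * N)
    (hconst : ∀ s ≤ t, (∀ i, z i ≤ t → z i ≤ s) → g s = N)
    (hmax : ∀ i, t < z i → ¬ z i ≤ a * g (z i)) :
    gridThreshold z a g ≤ a * N := by
  refine sup'_le _ _ fun o _ => ?_
  set s := o.elim 0 z
  unfold gridCandidate
  split_ifs with hfeas
  swap
  · exact ht0.trans htN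
  rcases le_or_gt s t with hst | hts
  · rcases le_or_gt (nextGridPt z s) t with hnt | htn
    · exact (min_le_right _ _).trans (hnt.trans htN)
    · have hgs : g s = N := hconst s hst fun i hit =>
        le_of_not_gt fun hsi => (nextGridPt_le hsi).trans hit |>.not_gt htn
      exact (min_le_left _ _).trans_eq (by rw [hgs])
  · cases o with
    | none => exact absurd hts (not_lt.mpr ht0)
    | some i => exact absurd hfeas (hmax i hts)

lemma measurable_nextGridPt (o : Option ι) :
    Measurable fun z : ι → ℝ => nextGridPt z (o.elim 0 z) := by
  have : (fun z : ι → ℝ => nextGridPt z (o.elim 0 z)) = univ.inf' univ_nonempty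
      fun (o' : Option ι) (z : ι → ℝ) =>
        o'.elim 1 fun i => if o.elim 0 z < z i then z i else 1 := by
    funext z; simp [nextGridPt, Finset.inf'_apply]
  rw [this]
  refine Finset.inf'_induction _ _ (fun _ hf _ hg => hf.inf hg) fun o' _ => ?_
  cases o' with
  | none => exact measurable_const
  | some i => exact Measurable.ite (measurableSet_lt (measurable_gridPt o)
      (measurable_pi_apply i)) (measurable_pi_apply i) measurable_const

lemma measurable_gridThreshold (a : ℝ) {G : (ι → ℝ) → ℝ → ℝ}
    (hG : ∀ o : Option ι, Measurable fun z => G z (o.elim 0 z)) :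
    Measurable fun z => gridThreshold z a (G z) := by
  have : (fun z => gridThreshold z a (G z)) = univ.sup' univ_nonempty
      fun (o : Option ι) (z : ι → ℝ) => gridCandidate z a (G z) (o.elim 0 z) := by
    funext z; simp [gridThreshold, Finset.sup'_apply]
  rw [this]
  refine Finset.measurable_sup' _ fun o _ => ?_
  exact Measurable.ite (measurableSet_le (measurable_gridPt o) ((hG o).const_mul a))
    ((hG o).const_mul a |>.min (measurable_nextGridPt o)) measurable_const

end Grid

section Filter

variable {m : ℕ} {F : Finset (Fin m) → (Fin m → ℝ) → (Fin m → ℝ)} {I : Fin m → Finset (Fin m)}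
  {q : ℝ} {p : Fin m → ℝ}

lemma normU_nonneg (hF : IsFilter F) (R : Finset (Fin m)) (x : Fin m → ℝ) :
    0 ≤ normU (F R x) :=
  sum_nonneg fun i _ => (hF R x i).2.1

lemma le_normU (hF : IsFilter F) (R : Finset (Fin m)) (x : Fin m → ℝ) (i : Fin m) :
    F R x i ≤ normU (F R x) :=
  single_le_sum (fun k _ => (hF R x k).2.1) (mem_univ i)

lemma genFDP_nonneg {H0 : Finset (Fin m)} {U : Fin m → ℝ} (hU : ∀ i, 0 ≤ U i) :
    0 ≤ genFDP H0 U :=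
  div_nonneg (sum_nonneg fun i _ => hU i) (sum_nonneg fun i _ => hU i)

lemma card_mul_div_le (s : Finset (Fin m)) (hq : 0 ≤ q) : (#s : ℝ) * (q / m) ≤ q := by
  rcases m.eq_zero_or_pos with rfl | hm
  · simp [hq]
  calc (#s : ℝ) * (q / m) ≤ m * (q / m) := by
        gcongr; exact_mod_cast (card_le_univ s).trans_eq (Fintype.card_fin m)
    _ = q := by field_simp

lemma FDPhat_le_of_le (hF : IsFilter F) (hq : 0 ≤ q) {t : ℝ}
    (h : (m : ℝ) * t ≤ q * normU (F (Rset t p) p)) : FDPhat F p t ≤ q :=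
  div_le_of_le_mul₀ (normU_nonneg hF _ _) hq h

lemma mem_Rset_of_pos (hF : IsFilter F) {R : Finset (Fin m)} {x : Fin m → ℝ} {j : Fin m}
    (h : 0 < F R x j) : j ∈ R :=
  by_contra fun hj => h.ne' ((hF R x j).1 hj)

lemma Rset_sdiff_eq {J : Finset (Fin m)} {x y : Fin m → ℝ} {s t : ℝ}
    (h : ∀ i ∉ J, (x i ≤ s ↔ y i ≤ t)) : Rset s x \ J = Rset t y \ J := by
  ext i
  simp only [Rset, mem_sdiff, mem_filter, mem_univ, true_and]
  exact ⟨fun ⟨hi, hiJ⟩ => ⟨(h i hiJ).mp hi, hiJ⟩, fun ⟨hi, hiJ⟩ => ⟨(h i hiJ).mpr hi, hiJ⟩⟩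

noncomputable def augmentedNorm (F : Finset (Fin m) → (Fin m → ℝ) → (Fin m → ℝ)) (j : Fin m)
    (x : Fin m → ℝ) (s : ℝ) : ℝ :=
  normU (F (insert j (Rset s x)) x)

lemma augmentedNorm_congr (hI : ∀ j, j ∈ I j) (hbs : BlockSimpleFilter F I) {j : Fin m}
    {x y : Fin m → ℝ} (hx : ∃ R, 0 < F R x j) (hy : ∃ R, 0 < F R y j)
    (hxy : ∀ i ∉ I j, x i = y i) (s : ℝ) : augmentedNorm F j x s = augmentedNorm F j y s :=
  hbs j x y hxy hx hy _ _ (mem_insert_self j _) (mem_insert_self j _) <| by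
    rw [insert_sdiff_of_mem _ (hI j), insert_sdiff_of_mem _ (hI j)]
    exact Rset_sdiff_eq fun i hi => by rw [hxy i hi]

lemma augmentedNorm_eq_normU (hI : ∀ j, j ∈ I j) (hbs : BlockSimpleFilter F I) {j : Fin m}
    (hp : ∃ R, 0 < F R p j) {s t : ℝ} (hjt : j ∈ Rset t p)
    (hst : Rset s p \ I j = Rset t p \ I j) :
    augmentedNorm F j p s = normU (F (Rset t p) p) :=
  hbs j p p (fun _ _ => rfl) hp hp _ _ (mem_insert_self j _) hjt <| by
    rwa [insert_sdiff_of_mem _ (hI j)]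

lemma tstar_le_gridThreshold_and_le (hI : ∀ j, j ∈ I j) (hF : IsFilter F)
    (hbs : BlockSimpleFilter F I) (hq : 0 ≤ q) (hp : ∀ i, p i ∈ Set.Icc (0 : ℝ) 1) {j : Fin m}
    {g : ℝ → ℝ} (hg : ∀ s, g s = augmentedNorm F j p s)
    (hj : 0 < F (Rset (tstar F q p) p) p j) :
    tstar F q p ≤ gridThreshold (fun i : {i // i ∉ I j} => p i) (q / m) g ∧
      gridThreshold (fun i : {i // i ∉ I j} => p i) (q / m) g ≤
        q / m * normU (F (Rset (tstar F q p) p) p) := by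
  set t := tstar F q p
  set N := normU (F (Rset t p) p)
  have hm : (0 : ℝ) < m := by exact_mod_cast j.pos
  have hjt : j ∈ Rset t p := mem_Rset_of_pos hF hj
  have ht0 : 0 ≤ t := (hp j).1.trans (mem_filter.mp hjt).2
  have ht1 : t ≤ 1 := tstar_le_one hq fun i => (hp i).2
  have htN : t ≤ q / m * N := by
    have hN : 0 < N := hj.trans_le (le_normU hF _ _ j)
    have := (tstar_mem (F := F) (p := p) hq).2
    rw [FDPhat, div_le_iff₀ hN] at this
    rw [div_mul_eq_mul_div, le_div_iff₀ hm]
    linarith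
  have hconst : ∀ s ≤ t, (∀ i : {i // i ∉ I j}, p i ≤ t → p i ≤ s) → g s = N :=
    fun s hst hgap => (hg s).trans <| augmentedNorm_eq_normU hI hbs ⟨_, hj⟩ hjt <|
      Rset_sdiff_eq fun i hi => ⟨fun h => h.trans hst, hgap ⟨i, hi⟩⟩
  have hmax : ∀ i : {i // i ∉ I j}, t < p i → ¬ p i ≤ q / m * g (p i) := by
    intro i hti hfeas
    have hji : j ∈ Rset (p i) p :=
      mem_filter.mpr ⟨mem_univ _, (mem_filter.mp hjt).2.trans hti.le⟩
    have hgi : g (p i) = normU (F (Rset (p i) p) p) := by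
      rw [hg, augmentedNorm, insert_eq_of_mem hji]
    refine (le_tstar (q := q) i (FDPhat_le_of_le hF hq ?_)).not_gt hti
    rw [← hgi]
    rw [div_mul_eq_mul_div, le_div_iff₀ hm] at hfeas
    linarith
  exact ⟨le_gridThreshold ht0 ht1 htN hconst, gridThreshold_le ht0 htN hconst hmax⟩

lemma measurable_Rset {δ : Type*} [MeasurableSpace δ] {σ : δ → ℝ} {Y : δ → Fin m → ℝ}
    (hσ : Measurable σ) (hY : Measurable Y) :
    Measurable fun d => Rset (σ d) (Y d) :=
  measurable_finset_iff.mpr fun i => by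
    simp only [Rset, mem_filter, mem_univ, true_and]
    exact measurableSet_setOfPred.mp (measurableSet_le ((measurable_pi_apply i).comp hY) hσ)

lemma measurable_augmentedNorm
    (hFmeas : ∀ (R : Finset (Fin m)) (i : Fin m), Measurable fun x => F R x i) (j : Fin m)
    {δ : Type*} [MeasurableSpace δ] {σ : δ → ℝ} {Y : δ → Fin m → ℝ} (hσ : Measurable σ)
    (hY : Measurable Y) :
    Measurable fun d => augmentedNorm F j (Y d) (σ d) := by
  have h : Measurable fun w : (Fin m → ℝ) × Finset (Fin m) => normU (F (insert j w.2) w.1) :=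
    measurable_from_prod_countable_left fun R =>
      Finset.measurable_sum _ fun i _ => hFmeas (insert j R) i
  exact h.comp (hY.prodMk (measurable_Rset hσ hY))

lemma measurableSet_exists_pos
    (hFmeas : ∀ (R : Finset (Fin m)) (i : Fin m), Measurable fun x => F R x i) (j : Fin m) :
    MeasurableSet {x | ∃ R, 0 < F R x j} := by
  simp only [Set.ofPred_exists]
  exact MeasurableSet.iUnion fun R => measurableSet_lt measurable_const (hFmeas R j)

lemma div_normU_le_indicator (hI : ∀ j, j ∈ I j) (hF : IsFilter F)
    (hbs : BlockSimpleFilter F I) (hq : 0 ≤ q) (hp : ∀ i, p i ∈ Set.Icc (0 : ℝ) 1) {j : Fin m}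
    (hpj : 0 < p j) {g : ℝ → ℝ} (hg : (∃ R, 0 < F R p j) → ∀ s, g s = augmentedNorm F j p s) :
    F (Rset (tstar F q p) p) p j / normU (F (Rset (tstar F q p) p) p) ≤
      q / m * (Set.Iic (gridThreshold (fun i : {i // i ∉ I j} => p i) (q / m) g)).indicator
        (fun _ => (gridThreshold (fun i : {i // i ∉ I j} => p i) (q / m) g)⁻¹) (p j) := by
  set T := gridThreshold (fun i : {i // i ∉ I j} => p i) (q / m) g
  set U := F (Rset (tstar F q p) p) p
  have ha : 0 ≤ q / m := div_nonneg hq m.cast_nonneg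
  rcases (hF (Rset (tstar F q p) p) p j).2.1.eq_or_lt with hU | hU
  · rw [show U j = 0 from hU.symm, zero_div]
    exact mul_nonneg ha (Set.indicator_nonneg (fun _ _ => inv_nonneg.mpr
      (gridThreshold_nonneg _ _)) _)
  obtain ⟨htT, hTN⟩ := tstar_le_gridThreshold_and_le hI hF hbs hq hp (hg ⟨_, hU⟩) hU
  have hpT : p j ≤ T := (mem_filter.mp (mem_Rset_of_pos hF hU)).2.trans htT
  have hT : 0 < T := hpj.trans_le hpT
  have hN : 0 < normU U := hU.trans_le (le_normU hF _ _ j)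
  rw [Set.indicator_of_mem (Set.mem_Iic.mpr hpT), ← div_eq_mul_inv, le_div_iff₀ hT]
  calc U j / normU U * T ≤ 1 / normU U * (q / m * normU U) :=
        mul_le_mul (div_le_div_of_nonneg_right (hF _ p j).2.2 hN.le) hTN hT.le
          (one_div_nonneg.mpr hN.le)
    _ = q / m := by field_simp

end Filter

section Probability

variable {Ω β E : Type*} [MeasurableSpace Ω] [MeasurableSpace β] [MeasurableSpace E]
  {μ : Measure Ω}

lemma lintegral_indicator_inv_le_one [IsProbabilityMeasure μ] {X : Ω → ℝ} {Y : Ω → β}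
    (hX : Measurable X) (hY : Measurable Y) (hXY : IndepFun X Y μ)
    (hsuper : ∀ t ∈ Set.Icc (0 : ℝ) 1, μ {ω | X ω ≤ t} ≤ ENNReal.ofReal t)
    {T : β → ℝ} (hT : Measurable T) (hT0 : ∀ y, 0 ≤ T y) (hT1 : ∀ y, T y ≤ 1) :
    ∫⁻ ω, ENNReal.ofReal ((Set.Iic (T (Y ω))).indicator (fun _ => (T (Y ω))⁻¹) (X ω)) ∂μ
      ≤ 1 := by
  set φ : ℝ × β → ℝ≥0∞ := fun w =>
    (Set.Iic (T w.2)).indicator (fun _ => ENNReal.ofReal (T w.2)⁻¹) w.1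
  have hφ : Measurable φ := by
    simp only [φ, Set.indicator_apply, Set.mem_Iic]
    exact Measurable.ite (measurableSet_le measurable_fst (hT.comp measurable_snd))
      (hT.comp measurable_snd).inv.ennreal_ofReal measurable_const
  have hinner : ∀ y, ∫⁻ x, φ (x, y) ∂μ.map X ≤ 1 := fun y => by
    simp only [φ]
    rw [lintegral_indicator_const measurableSet_Iic, Measure.map_apply hX measurableSet_Iic]
    calc ENNReal.ofReal (T y)⁻¹ * μ (X ⁻¹' Set.Iic (T y))
        ≤ ENNReal.ofReal (T y)⁻¹ * ENNReal.ofReal (T y) :=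
          mul_le_mul_right (hsuper _ ⟨hT0 y, hT1 y⟩) _
      _ ≤ 1 := by
          rw [← ENNReal.ofReal_mul (inv_nonneg.mpr (hT0 y))]
          exact ENNReal.ofReal_le_one.mpr inv_mul_le_one
  have := Measure.isProbabilityMeasure_map (μ := μ) hY.aemeasurable
  calc ∫⁻ ω, ENNReal.ofReal ((Set.Iic (T (Y ω))).indicator (fun _ => (T (Y ω))⁻¹) (X ω)) ∂μ
      = ∫⁻ ω, φ (X ω, Y ω) ∂μ := lintegral_congr fun ω =>
        congr_fun (Set.indicator_comp_of_zero ENNReal.ofReal_zero).symm (X ω)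
    _ = ∫⁻ y, ∫⁻ x, φ (x, y) ∂μ.map X ∂μ.map Y := by
        rw [← lintegral_map hφ (hX.prodMk hY),
          (indepFun_iff_map_prod_eq_prod_map_map hX.aemeasurable hY.aemeasurable).mp hXY,
          lintegral_prod_symm _ hφ.aemeasurable]
    _ ≤ ∫⁻ _, 1 ∂μ.map Y := lintegral_mono hinner
    _ = 1 := by simp

lemma integrable_indicator_inv_and_integral_le_one [IsProbabilityMeasure μ] {X : Ω → ℝ}
    {Y : Ω → β} (hX : Measurable X) (hY : Measurable Y) (hXY : IndepFun X Y μ)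
    (hsuper : ∀ t ∈ Set.Icc (0 : ℝ) 1, μ {ω | X ω ≤ t} ≤ ENNReal.ofReal t)
    {T : β → ℝ} (hT : Measurable T) (hT0 : ∀ y, 0 ≤ T y) (hT1 : ∀ y, T y ≤ 1) :
    Integrable (fun ω => (Set.Iic (T (Y ω))).indicator (fun _ => (T (Y ω))⁻¹) (X ω)) μ ∧
      ∫ ω, (Set.Iic (T (Y ω))).indicator (fun _ => (T (Y ω))⁻¹) (X ω) ∂μ ≤ 1 := by
  have hlin := lintegral_indicator_inv_le_one hX hY hXY hsuper hT hT0 hT1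
  have hψ0 : 0 ≤ᵐ[μ] fun ω => (Set.Iic (T (Y ω))).indicator (fun _ => (T (Y ω))⁻¹) (X ω) :=
    .of_forall fun ω => Set.indicator_nonneg (fun _ _ => inv_nonneg.mpr (hT0 _)) _
  have hψ : AEStronglyMeasurable
      (fun ω => (Set.Iic (T (Y ω))).indicator (fun _ => (T (Y ω))⁻¹) (X ω)) μ := by
    simp only [Set.indicator_apply, Set.mem_Iic]
    exact (Measurable.ite (measurableSet_le hX (hT.comp hY)) (hT.comp hY).inv
      measurable_const).aestronglyMeasurable
  refine ⟨⟨hψ, (hasFiniteIntegral_iff_ofReal hψ0).mpr (hlin.trans_lt ENNReal.one_lt_top)⟩, ?_⟩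
  rw [integral_eq_lintegral_of_nonneg_ae hψ0 hψ]
  exact ENNReal.toReal_le_of_le_ofReal zero_le_one (hlin.trans_eq ENNReal.ofReal_one.symm)

lemma Measurable.setAverage_kernel {κ : Kernel β E} [IsFiniteKernel κ] {f : β × E → ℝ}
    (hf : Measurable f) {W : Set E} (hW : MeasurableSet W) :
    Measurable fun z => ⨍ y in W, f (z, y) ∂κ z := by
  simp_rw [setAverage_eq, smul_eq_mul, measureReal_def, ← Kernel.restrict_apply κ hW]
  exact (κ.measurable_coe hW).ennreal_toReal.inv.mul
    (hf.stronglyMeasurable.integral_kernel_prod_right' (κ := κ.restrict hW)).measurable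

variable [IsFiniteMeasure μ] {X : Ω → β} {Y : Ω → E} {κ : Kernel β E} [IsSFiniteKernel κ]
  [(μ.map fun ω => (X ω, Y ω)).IsCondKernel κ]

lemma ae_ae_of_isCondKernel_map (hX : Measurable X) (hY : Measurable Y) {P : β × E → Prop}
    (hP : MeasurableSet {w | P w}) (h : ∀ᵐ ω ∂μ, P (X ω, Y ω)) :
    ∀ᵐ ω ∂μ, ∀ᵐ y ∂κ (X ω), P (X ω, y) := by
  have hρ : ∀ᵐ w ∂(μ.map X ⊗ₘ κ), P w := by
    rw [← Measure.fst_map_prodMk hY, Measure.disintegrate]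
    exact (ae_map_iff (hX.prodMk hY).aemeasurable hP).mpr h
  exact ae_of_ae_map hX.aemeasurable (Measure.ae_ae_of_ae_compProd hρ)

lemma ae_kernel_ne_zero_of_isCondKernel_map (hX : Measurable X) (hY : Measurable Y) {W : Set E}
    (hW : MeasurableSet W) : ∀ᵐ ω ∂μ, Y ω ∈ W → κ (X ω) W ≠ 0 := by
  have hρ : ∀ᵐ w ∂(μ.map X ⊗ₘ κ), w.2 ∈ W → κ w.1 W ≠ 0 := by
    refine (Measure.ae_compProd_iff ?_).mpr (.of_forall fun z => ?_)
    · exact (measurable_snd hW).himp ((κ.measurable_coe hW).comp measurable_fst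
        (measurableSet_singleton 0).compl)
    by_cases hz : κ z W = 0
    · filter_upwards [measure_eq_zero_iff_ae_notMem.mp hz] with y hy using fun h => absurd h hy
    · exact .of_forall fun _ _ => hz
  rw [← Measure.fst_map_prodMk hY, Measure.disintegrate] at hρ
  exact ae_of_ae_map (hX.prodMk hY).aemeasurable hρ

end Probability

section PerNull

variable {Ω : Type*} [MeasurableSpace Ω] {μ : Measure Ω} [IsProbabilityMeasure μ] {m : ℕ}
  {p : Ω → Fin m → ℝ} {F : Finset (Fin m) → (Fin m → ℝ) → (Fin m → ℝ)}
  {I : Fin m → Finset (Fin m)} {q : ℝ}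

lemma ae_condKernel_setAverage_augmentedNorm (hpmeas : Measurable p) (hI : ∀ j, j ∈ I j)
    (hFmeas : ∀ (R : Finset (Fin m)) (i : Fin m), Measurable fun x => F R x i)
    (hbs : BlockSimpleFilter F I) (j : Fin m) :
    ∀ᵐ ω ∂μ, (∃ R, 0 < F R (p ω) j) → ∀ s,
      ⨍ x in {x | ∃ R, 0 < F R x j}, augmentedNorm F j x s
        ∂(μ.map fun ω => (fun i : {i // i ∉ I j} => p ω i, p ω)).condKernel
          (fun i : {i // i ∉ I j} => p ω i) = augmentedNorm F j (p ω) s := by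
  set Z : Ω → {i // i ∉ I j} → ℝ := fun ω i => p ω i
  have hZ : Measurable Z := measurable_pi_lambda _ fun i => (measurable_pi_apply i.1).comp hpmeas
  set κ := (μ.map fun ω => (Z ω, p ω)).condKernel
  have hW := measurableSet_exists_pos hFmeas j
  have hfiber : ∀ᵐ ω ∂μ, ∀ᵐ x ∂κ (Z ω), ∀ i : {i // i ∉ I j}, x i = Z ω i := by
    refine ae_ae_of_isCondKernel_map hZ hpmeas
      (P := fun w => ∀ i : {i // i ∉ I j}, w.2 i = w.1 i) ?_ (.of_forall fun _ _ => rfl)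
    simp only [Set.ofPred_forall]
    exact MeasurableSet.iInter fun i => measurableSet_eq_fun
      ((measurable_pi_apply i.1).comp measurable_snd) ((measurable_pi_apply i).comp measurable_fst)
  filter_upwards [hfiber, ae_kernel_ne_zero_of_isCondKernel_map (μ := μ) (κ := κ) hZ hpmeas hW]
    with ω hfib hne hpW s
  calc ⨍ x in _, augmentedNorm F j x s ∂κ (Z ω)
      = ⨍ _ in {x | ∃ R, 0 < F R x j}, augmentedNorm F j (p ω) s ∂κ (Z ω) :=
        setAverage_congr_fun hW <| hfib.mono fun x hx hxW =>
          augmentedNorm_congr hI hbs hxW hpW (fun i hi => hx ⟨i, hi⟩) s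
    _ = augmentedNorm F j (p ω) s := setAverage_const (hne hpW) (measure_ne_top _ _) _

lemma exists_ae_div_normU_le (hpmeas : Measurable p) (hp01 : ∀ ω i, p ω i ∈ Set.Icc (0 : ℝ) 1)
    (hI : ∀ j, j ∈ I j) (hF : IsFilter F)
    (hFmeas : ∀ (R : Finset (Fin m)) (i : Fin m), Measurable fun x => F R x i)
    (hbs : BlockSimpleFilter F I) (hq : 0 ≤ q) {j : Fin m}
    (hindep : IndepFun (fun ω => p ω j) (fun ω => fun i : {i // i ∉ I j} => p ω i) μ)
    (hsuper : ∀ t ∈ Set.Icc (0 : ℝ) 1, μ {ω | p ω j ≤ t} ≤ ENNReal.ofReal t) :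
    ∃ ψ : Ω → ℝ, Integrable ψ μ ∧ ∫ ω, ψ ω ∂μ ≤ q / m ∧
      ∀ᵐ ω ∂μ, F (Rset (tstar F q (p ω)) (p ω)) (p ω) j /
        normU (F (Rset (tstar F q (p ω)) (p ω)) (p ω)) ≤ ψ ω := by
  set Z : Ω → {i // i ∉ I j} → ℝ := fun ω i => p ω i
  have hZ : Measurable Z := measurable_pi_lambda _ fun i => (measurable_pi_apply i.1).comp hpmeas
  have hpj : Measurable fun ω => p ω j := (measurable_pi_apply j).comp hpmeas
  set g : ({i // i ∉ I j} → ℝ) → ℝ → ℝ := fun z s => ⨍ x in {x | ∃ R, 0 < F R x j},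
    augmentedNorm F j x s ∂(μ.map fun ω => (Z ω, p ω)).condKernel z
  have hT : Measurable fun z => gridThreshold z (q / m) (g z) :=
    measurable_gridThreshold _ fun o => Measurable.setAverage_kernel
      (measurable_augmentedNorm hFmeas j ((measurable_gridPt o).comp measurable_fst)
        measurable_snd) (measurableSet_exists_pos hFmeas j)
  obtain ⟨hint, hle⟩ := integrable_indicator_inv_and_integral_le_one hpj hZ hindep hsuper hT
    (fun z => gridThreshold_nonneg _ _) (fun z => gridThreshold_le_one _ _)
  refine ⟨_, hint.const_mul (q / m), ?_, ?_⟩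
  · rw [integral_const_mul]
    exact mul_le_of_le_one_right (div_nonneg hq m.cast_nonneg) hle
  have hpj0 : ∀ᵐ ω ∂μ, 0 < p ω j := by
    rw [ae_iff]
    simpa using hsuper 0 ⟨le_rfl, zero_le_one⟩
  filter_upwards [ae_condKernel_setAverage_augmentedNorm hpmeas hI hFmeas hbs j, hpj0]
    with ω hg hpj0
  exact div_normU_le_indicator hI hF hbs hq (hp01 ω) hpj0 hg

end PerNull

end FocusedBH

open FocusedBH

/-- **Focused BH under block independence (Theorem 1(iii)).**
If the null p-values are superuniform, the p-values are block independent with respect to a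
collection of sets `I` with `j ∈ I j` (i.e. each `p_j` is independent of the coordinates
outside `I j`), and the filter is block simple with respect to the same collection, then
Focused BH at level `q` controls the generalized FDR: `E[FDP(U*)] ≤ q`. -/
theorem focusedBH_FDR_control_of_blockIndep_of_blockSimple
    {Ω : Type*} [MeasurableSpace Ω] (μ : Measure Ω) [IsProbabilityMeasure μ]
    {m : ℕ} (H0 : Finset (Fin m)) (p : Ω → Fin m → ℝ)
    (hpmeas : Measurable p)
    (hp01 : ∀ ω i, p ω i ∈ Set.Icc (0 : ℝ) 1)
    (hsuper : Superuniform μ p H0)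
    (I : Fin m → Finset (Fin m)) (hI : ∀ j, j ∈ I j)
    (hindep : ∀ j : Fin m, ProbabilityTheory.IndepFun
      (fun ω => p ω j) (fun ω => (fun i : {i : Fin m // i ∉ I j} => p ω i)) μ)
    (F : Finset (Fin m) → (Fin m → ℝ) → (Fin m → ℝ))
    (hF : IsFilter F)
    (hFmeas : ∀ (R : Finset (Fin m)) (j : Fin m), Measurable (fun x : Fin m → ℝ => F R x j))
    (hblocksimple : BlockSimpleFilter F I)
    (q : ℝ) (hq : q ∈ Set.Ioo (0 : ℝ) 1) :
    ∫ ω, genFDP H0 (F (Rset (tstar F q (p ω)) (p ω)) (p ω)) ∂μ ≤ q := by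
  have hq0 : 0 ≤ q := hq.1.le
  choose ψ hψint hψle hψae using fun j : H0 => exists_ae_div_normU_le hpmeas hp01 hI hF hFmeas
    hblocksimple hq0 (hindep j) (hsuper j j.2)
  have hbound : ∀ᵐ ω ∂μ, genFDP H0 (F (Rset (tstar F q (p ω)) (p ω)) (p ω)) ≤ ∑ j, ψ j ω := by
    filter_upwards [ae_all_iff.mpr hψae] with ω hω
    rw [genFDP, sum_div, ← sum_coe_sort H0]
    exact sum_le_sum fun j _ => hω j
  calc ∫ ω, genFDP H0 (F (Rset (tstar F q (p ω)) (p ω)) (p ω)) ∂μ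
      ≤ ∫ ω, ∑ j, ψ j ω ∂μ := integral_mono_of_nonneg
        (.of_forall fun ω => genFDP_nonneg fun i => (hF _ _ i).2.1)
        (integrable_finsetSum _ fun j _ => hψint j) hbound
    _ = ∑ j, ∫ ω, ψ j ω ∂μ := integral_finsetSum _ fun j _ => hψint j
    _ ≤ ∑ _j : H0, q / m := sum_le_sum fun j _ => hψle j
    _ ≤ q := by simpa using card_mul_div_le H0 hq0
end

section
/- In the soft outer nodes setting, the soft outer nodes filter is monotonic on arbitrary DAG structures: for any R1 ⊇ R2 ⊆ [m], ‖F_0(R1)‖ ≥ ‖F_0(R2)‖. -/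
open Finset

/-- `S_g(R)`: the minimum size of a discovered node containing gene `g`
(`⊤` if no node in `R` contains `g`). -/
def Sg {m G : ℕ} (𝒢 : Fin m → Finset (Fin G)) (R : Finset (Fin m)) (g : Fin G) : WithTop ℕ :=
  ((R.filter (fun j => g ∈ 𝒢 j)).image (fun j => (𝒢 j).card)).min

/-- `R^g`: the discovered nodes containing gene `g` whose gene set attains the minimum size
`S_g(R)` (empty if no node in `R` contains `g`). -/
def Rg {m G : ℕ} (𝒢 : Fin m → Finset (Fin G)) (R : Finset (Fin m)) (g : Fin G) :
    Finset (Fin m) :=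
  R.filter (fun j => g ∈ 𝒢 j ∧ ((𝒢 j).card : WithTop ℕ) = Sg 𝒢 R g)

/-- The soft outer nodes prioritization weight of node `j` given rejection set `R`:
`U_j(R) = -log(|𝒢_j|/G) · (Σ_{g ∈ 𝒢_j} 𝟙(j ∈ R^g)/|R^g|)/|𝒢_j|` for `j ∈ R`, else `0`. -/
noncomputable def softU {m G : ℕ} (𝒢 : Fin m → Finset (Fin G)) (R : Finset (Fin m))
    (j : Fin m) : ℝ :=
  if j ∈ R then
    (- Real.log (((𝒢 j).card : ℝ) / (G : ℝ))) *
      ((∑ g ∈ 𝒢 j, if j ∈ Rg 𝒢 R g then (1 : ℝ) / ((Rg 𝒢 R g).card : ℝ) else 0) /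
        ((𝒢 j).card : ℝ))
  else 0

/-- Total soft outer nodes weight `‖F_0(R)‖ = Σ_j U_j(R)`. -/
noncomputable def softNorm {m G : ℕ} (𝒢 : Fin m → Finset (Fin G))
    (R : Finset (Fin m)) : ℝ :=
  ∑ j, softU 𝒢 R j

noncomputable def A {m G : ℕ} (𝒢 : Fin m → Finset (Fin G)) (j : Fin m) : ℝ :=
  (- Real.log (((𝒢 j).card : ℝ) / (G : ℝ))) / ((𝒢 j).card : ℝ)

lemma mem_Rg {m G : ℕ} {𝒢 : Fin m → Finset (Fin G)} {R : Finset (Fin m)} {g : Fin G}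
    {j : Fin m} (h : j ∈ Rg 𝒢 R g) :
    j ∈ R ∧ g ∈ 𝒢 j ∧ ((𝒢 j).card : WithTop ℕ) = Sg 𝒢 R g := by
  rw [Rg, mem_filter] at h; tauto

lemma softNorm_eq {m G : ℕ} (𝒢 : Fin m → Finset (Fin G)) (R : Finset (Fin m)) :
    softNorm 𝒢 R = ∑ g : Fin G, ∑ j ∈ Rg 𝒢 R g, A 𝒢 j / ((Rg 𝒢 R g).card : ℝ) := by
  rw [softNorm]
  have hU : ∀ j : Fin m, softU 𝒢 R j =
      ∑ g : Fin G, if j ∈ Rg 𝒢 R g then A 𝒢 j / ((Rg 𝒢 R g).card : ℝ) else 0 := by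
    intro j
    rw [softU]
    by_cases hj : j ∈ R
    · rw [if_pos hj, mul_div_assoc', ← div_mul_eq_mul_div, Finset.mul_sum]
      rw [← Finset.sum_subset (Finset.subset_univ (𝒢 j))]
      · apply Finset.sum_congr rfl
        intro g _
        by_cases hg : j ∈ Rg 𝒢 R g
        · rw [if_pos hg, if_pos hg, A]; ring
        · simp [hg]
      · intro g _ hg
        have : j ∉ Rg 𝒢 R g := fun h => hg (mem_Rg h).2.1
        simp [this]
    · rw [if_neg hj]
      symm
      apply Finset.sum_eq_zero
      intro g _
      have : j ∉ Rg 𝒢 R g := fun h => hj (mem_Rg h).1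
      simp [this]
  rw [Finset.sum_congr rfl (fun j _ => hU j), Finset.sum_comm]
  apply Finset.sum_congr rfl
  intro g _
  rw [Finset.sum_ite_mem, Finset.univ_inter]

lemma A_nonneg {m G : ℕ} (𝒢 : Fin m → Finset (Fin G)) (h𝒢 : ∀ j, (𝒢 j).Nonempty)
    (j : Fin m) : 0 ≤ A 𝒢 j := by
  have hc : 0 < ((𝒢 j).card : ℝ) := by
    exact_mod_cast Finset.card_pos.mpr (h𝒢 j)
  have hG : ((𝒢 j).card : ℝ) ≤ (G : ℝ) := by
    exact_mod_cast (Finset.card_le_univ (𝒢 j)).trans_eq (Finset.card_fin G)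
  apply div_nonneg _ hc.le
  rw [neg_nonneg]
  apply Real.log_nonpos (by positivity)
  rw [div_le_one (hc.trans_le hG)]
  exact hG

/-- `A` is antitone in the card of the gene set. -/
lemma A_mono {m G : ℕ} (𝒢 : Fin m → Finset (Fin G)) (h𝒢 : ∀ j, (𝒢 j).Nonempty)
    {j1 j2 : Fin m} (h : (𝒢 j1).card ≤ (𝒢 j2).card) : A 𝒢 j2 ≤ A 𝒢 j1 := by
  have hc1 : 0 < ((𝒢 j1).card : ℝ) := by
    exact_mod_cast Finset.card_pos.mpr (h𝒢 j1)
  have hc2 : 0 < ((𝒢 j2).card : ℝ) := by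
    exact_mod_cast Finset.card_pos.mpr (h𝒢 j2)
  have hc12 : ((𝒢 j1).card : ℝ) ≤ ((𝒢 j2).card : ℝ) := by exact_mod_cast h
  have hG2 : ((𝒢 j2).card : ℝ) ≤ (G : ℝ) := by
    exact_mod_cast (Finset.card_le_univ (𝒢 j2)).trans_eq (Finset.card_fin G)
  have hGpos : (0:ℝ) < (G:ℝ) := lt_of_lt_of_le hc2 hG2
  have hlog1 : - Real.log (((𝒢 j1).card : ℝ) / (G : ℝ)) = Real.log G - Real.log ((𝒢 j1).card) := by
    rw [Real.log_div hc1.ne' hGpos.ne']; ring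
  have hlog2 : - Real.log (((𝒢 j2).card : ℝ) / (G : ℝ)) = Real.log G - Real.log ((𝒢 j2).card) := by
    rw [Real.log_div hc2.ne' hGpos.ne']; ring
  rw [A, A, hlog1, hlog2]
  have h1 : Real.log ((𝒢 j2).card) ≤ Real.log G := Real.log_le_log hc2 hG2
  calc (Real.log G - Real.log ((𝒢 j2).card)) / ((𝒢 j2).card : ℝ)
      ≤ (Real.log G - Real.log ((𝒢 j1).card)) / ((𝒢 j2).card : ℝ) := by
        gcongr
    _ ≤ (Real.log G - Real.log ((𝒢 j1).card)) / ((𝒢 j1).card : ℝ) := by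
        have hnum : 0 ≤ Real.log G - Real.log ((𝒢 j1).card : ℝ) := by
          rw [sub_nonneg]
          exact (Real.log_le_log hc1 hc12).trans h1
        exact div_le_div_of_nonneg_left hnum hc1 hc12

lemma perGene_const {m G : ℕ} (𝒢 : Fin m → Finset (Fin G)) (R : Finset (Fin m)) (g : Fin G)
    {j0 : Fin m} (hj0 : j0 ∈ Rg 𝒢 R g) :
    ∑ j ∈ Rg 𝒢 R g, A 𝒢 j / ((Rg 𝒢 R g).card : ℝ) = A 𝒢 j0 := by
  have hcard : ∀ j ∈ Rg 𝒢 R g, A 𝒢 j = A 𝒢 j0 := by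
    intro j hj
    have h1 := (mem_Rg hj).2.2
    have h2 := (mem_Rg hj0).2.2
    have : ((𝒢 j).card : WithTop ℕ) = ((𝒢 j0).card : WithTop ℕ) := h1.trans h2.symm
    have hc : (𝒢 j).card = (𝒢 j0).card := by exact_mod_cast this
    rw [A, A, hc]
  have hne : (0:ℝ) < ((Rg 𝒢 R g).card : ℝ) := by
    exact_mod_cast Finset.card_pos.mpr ⟨j0, hj0⟩
  rw [Finset.sum_congr rfl (fun j hj => by rw [hcard j hj])]
  rw [Finset.sum_const, nsmul_eq_mul, mul_div_assoc']
  field_simp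

/-- **The soft outer nodes filter is monotonic (on arbitrary DAG structures).**
In the soft outer nodes setting, for any `R1 ⊇ R2`, `‖F_0(R1)‖ ≥ ‖F_0(R2)‖`. -/
theorem softOuterNodes_monotonic
    {m G : ℕ} (𝒢 : Fin m → Finset (Fin G)) (h𝒢 : ∀ j, (𝒢 j).Nonempty) :
    ∀ R1 R2 : Finset (Fin m), R2 ⊆ R1 → softNorm 𝒢 R2 ≤ softNorm 𝒢 R1 := by
  intro R1 R2 hsub
  rw [softNorm_eq, softNorm_eq]
  apply Finset.sum_le_sum
  intro g _
  by_cases h2 : (Rg 𝒢 R2 g).Nonempty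
  · -- pick min attainers
    obtain ⟨j2, hj2⟩ := h2
    obtain ⟨hj2R, hj2g, hj2c⟩ := mem_Rg hj2
    -- j2 ∈ R1's filter, so image nonempty
    have hj2f : j2 ∈ R1.filter (fun j => g ∈ 𝒢 j) :=
      Finset.mem_filter.mpr ⟨hsub hj2R, hj2g⟩
    have hne1 : ((R1.filter (fun j => g ∈ 𝒢 j)).image (fun j => (𝒢 j).card)).Nonempty :=
      ⟨(𝒢 j2).card, Finset.mem_image_of_mem _ hj2f⟩
    -- the min of R1's image is attained
    have hmin := Finset.min'_mem _ hne1
    rw [Finset.mem_image] at hmin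
    obtain ⟨j1, hj1f, hj1c⟩ := hmin
    obtain ⟨hj1R, hj1g⟩ := Finset.mem_filter.mp hj1f
    have hS1 : Sg 𝒢 R1 g = ((𝒢 j1).card : WithTop ℕ) := by
      rw [Sg, ← Finset.coe_min' hne1, hj1c]
      rfl
    have hj1 : j1 ∈ Rg 𝒢 R1 g :=
      Finset.mem_filter.mpr ⟨hj1R, hj1g, hS1.symm⟩
    rw [perGene_const 𝒢 R2 g hj2, perGene_const 𝒢 R1 g hj1]
    apply A_mono 𝒢 h𝒢
    -- card j1 ≤ card j2 : Sg R1 ≤ card j2 since j2 in R1 filter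
    have : Sg 𝒢 R1 g ≤ ((𝒢 j2).card : WithTop ℕ) :=
      Finset.min_le (Finset.mem_image_of_mem _ hj2f)
    rw [hS1] at this
    exact_mod_cast this
  · rw [Finset.not_nonempty_iff_eq_empty] at h2
    rw [h2, Finset.sum_empty]
    apply Finset.sum_nonneg
    intro j hj
    exact div_nonneg (A_nonneg 𝒢 h𝒢 j) (Nat.cast_nonneg _)
end
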